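/- Let C be a stable curve of compact type of genus g ≥ 2 having no central component. Then C has exactly two semicentral components, and these two components intersect in a node. -/

import Mathlib

open Finset

/-- An abstract (combinatorial) model of a nodal curve: a finite set of irreducible
components `V` (with geometric genus `w v`), and a finite set of nodes `N`, each node
lying on the (unordered pair of) components recorded by `ends`. -/
structure NodalCurve where
  V : Type
  N : Type
  [instFV : Fintype V]
  [instDV : DecidableEq V]
  [instFN : Fintype N]
  [instDN : DecidableEq N]
  ends : N → Sym2 V
  w : V → ℕ

namespace NodalCurve

variable (C : NodalCurve)

instance : Fintype C.V := C.instFV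
instance : DecidableEq C.V := C.instDV
instance : Fintype C.N := C.instFN
instance : DecidableEq C.N := C.instDN

/-- The dual graph of the curve (as a simple graph on the components). -/
def graph : SimpleGraph C.V :=
  SimpleGraph.fromRel (fun u v => ∃ n, C.ends n = s(u, v))

/-- The number of branches (ends) of the node `n` lying on the subcurve `S`. -/
def endsIn (S : Finset C.V) (n : C.N) : ℕ :=
  Sym2.lift ⟨fun a b => (if a ∈ S then 1 else 0) + (if b ∈ S then 1 else 0),
    fun _ _ => add_comm _ _⟩ (C.ends n)

/-- `k S = #(Y ∩ Y')`: the number of nodes where the subcurve `S` meets its complement. -/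
def k (S : Finset C.V) : ℕ := (univ.filter fun n => C.endsIn S n = 1).card

/-- nodes both of whose branches lie on `S`. -/
def internalNodes (S : Finset C.V) : ℕ := (univ.filter fun n => C.endsIn S n = 2).card

/-- The (arithmetic) genus of the curve. -/
def genus : ℤ :=
  ∑ v, (C.w v : ℤ) + (Fintype.card C.N : ℤ) - (Fintype.card C.V : ℤ) + 1

/-- The genus `1 - χ(O_Y)` of a (connected) subcurve with components `S`. -/
def genusSub (S : Finset C.V) : ℤ :=
  ∑ v ∈ S, (C.w v : ℤ) + (C.internalNodes S : ℤ) - (S.card : ℤ) + 1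

/-- `χ(O_Y)` for the subcurve `Y` with components `S`. -/
def chiO (S : Finset C.V) : ℤ :=
  (S.card : ℤ) - ∑ v ∈ S, (C.w v : ℤ) - (C.internalNodes S : ℤ)

/-- The degree of `ω_C` restricted to the subcurve with components `S`. -/
def degω (S : Finset C.V) : ℤ :=
  ∑ v ∈ S, (2 * (C.w v : ℤ) - 2) + ∑ n, (C.endsIn S n : ℤ)

/-- Connectedness of the subcurve with components `S`. -/
def connectedSub (S : Finset C.V) : Prop := (C.graph.induce (S : Set C.V)).Connected

/-- Connectedness of the curve. -/
def Conn : Prop := C.graph.Connected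

/-- The curve is of compact type: every node is separating, i.e. the dual graph
(with its multiple edges and loops) is a tree. -/
def CompactType : Prop :=
  Function.Injective C.ends ∧ (∀ n, ¬ (C.ends n).IsDiag) ∧ C.graph.IsTree

/-- Deligne–Mumford stability. -/
def Stable : Prop := ∀ v, 0 < 2 * (C.w v : ℤ) - 2 + ∑ n, (C.endsIn {v} n : ℤ)

/-- A tail: a subcurve meeting its complement in exactly one node. -/
def isTail (S : Finset C.V) : Prop := C.k S = 1

/-- The degree `d_Y` of a multidegree `e` on the subcurve with components `S`. -/
def degSub (e : C.V → ℤ) (S : Finset C.V) : ℤ := ∑ v ∈ S, e v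

/-- The total degree of a multidegree. -/
def totalDeg (e : C.V → ℤ) : ℤ := ∑ v, e v

/-- Semistability (w.r.t. the canonical polarization) at the subcurve `S`:
`|d_Y - d·deg(ω_C|_Y)/(2g-2)| ≤ k_Y/2`. -/
def semistableAt (e : C.V → ℤ) (S : Finset C.V) : Prop :=
  |(C.degSub e S : ℚ) - (C.totalDeg e : ℚ) * (C.degω S : ℚ) / (2 * (C.genus : ℚ) - 2)|
    ≤ (C.k S : ℚ) / 2

/-- The strict lower inequality of quasistability at the subcurve `S`:
`d_Y - d·deg(ω_C|_Y)/(2g-2) > -k_Y/2`. -/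
def quasistableLowAt (e : C.V → ℤ) (S : Finset C.V) : Prop :=
  -((C.k S : ℚ) / 2) <
    (C.degSub e S : ℚ) - (C.totalDeg e : ℚ) * (C.degω S : ℚ) / (2 * (C.genus : ℚ) - 2)

/-- A semistable multidegree. -/
def semistable (e : C.V → ℤ) : Prop :=
  ∀ S : Finset C.V, S.Nonempty → S ≠ univ → C.semistableAt e S

/-- An `X`-quasistable multidegree. -/
def Xquasistable (X : C.V) (e : C.V → ℤ) : Prop :=
  C.semistable e ∧
    ∀ S : Finset C.V, S.Nonempty → S ≠ univ → X ∈ S → C.quasistableLowAt e S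

/-- A `d̄`-big tail: `d_Z·deg(ω_C) - d·deg(ω_C|_Z) < 2g_Z - g`. -/
def isBigTail (e : C.V → ℤ) (S : Finset C.V) : Prop :=
  C.isTail S ∧
    C.degSub e S * (2 * C.genus - 2) - C.totalDeg e * C.degω S
      < 2 * C.genusSub S - C.genus

/-- `S` is (the set of components of) a connected component of the complement `X'`
of the irreducible component `x`. -/
def complComponent (x : C.V) (S : Finset C.V) : Prop :=
  x ∉ S ∧ S.Nonempty ∧ C.connectedSub S ∧
    ∀ u ∈ S, ∀ v : C.V, C.graph.Adj u v → v ≠ x → v ∈ S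

/-- `T` is (the set of components of) a connected component of the subcurve `S`. -/
def subComponent (S T : Finset C.V) : Prop :=
  T ⊆ S ∧ T.Nonempty ∧ C.connectedSub T ∧
    ∀ u ∈ T, ∀ v ∈ S, C.graph.Adj u v → v ∈ T

/-- A central component: every connected component `Z` of `X'` has `g_Z < g/2`. -/
def central (x : C.V) : Prop :=
  ∀ S : Finset C.V, C.complComponent x S → 2 * C.genusSub S < C.genus

/-- A semicentral component: every connected component `Z` of `X'` has `g_Z ≤ g/2`. -/
def semicentral (x : C.V) : Prop :=
  ∀ S : Finset C.V, C.complComponent x S → 2 * C.genusSub S ≤ C.genus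

end NodalCurve

/-!
In compact type the dual graph is a tree, nodes are its edges, and a connected subcurve has
genus equal to the sum `weight` of the genera of its components. Hence the connected
components of `X'` are the branches `side x y` of the tree at `x`, and the weights of the two
branches cut out by an edge add up to `g`.

Choose an edge `xy` whose branch `side x y` has weight `≥ g/2` with as few components as
possible. Since `y` is not central either, some branch at `y` has weight `≥ g/2`; any branch at
`y` other than `side y x` lies strictly inside `side x y`, so it is `side y x`, and both branches
of `xy` weigh exactly `g/2`. This makes `x` and `y` semicentral.

Stability gives `#S ≤ deg ω_S = 2 g_S - 2 + k_S`, so a nonempty subcurve meeting the rest in at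
most two nodes has positive genus; applied to the difference of two nested branches, weights
of branches strictly increase along strict inclusions. A third semicentral component `z`, say
on the `y` side of `xy`, would have a branch strictly containing `side y x`, of weight `> g/2`.
-/

namespace SimpleGraph

variable {V : Type*} {G : SimpleGraph V}

theorem IsAcyclic.card_edgeSet_add_one_le [Finite V] [Nonempty V] (h : G.IsAcyclic) :
    Nat.card G.edgeSet + 1 ≤ Nat.card V := by
  obtain ⟨F, hGF, -, hF⟩ := connected_top.exists_isTree_le_of_le_of_isAcyclic le_top h
  rw [← (isTree_iff_connected_and_card.1 hF).2]
  gcongr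
  exact Nat.card_mono (Set.toFinite _) (edgeSet_mono hGF)

theorem Reachable.mem_of_adj_closed {s : Set V} (hs : ∀ u v, G.Adj u v → u ∈ s → v ∈ s)
    {a b : V} (h : G.Reachable a b) (ha : a ∈ s) : b ∈ s := by
  obtain ⟨p⟩ := h
  induction p with
  | nil => exact ha
  | cons hadj _ ih => exact ih (hs _ _ hadj ha)

theorem subset_of_induce_connected {s t : Set V} {x a : V} (hs : (G.induce s).Connected)
    (hx : x ∉ s) (ht : ∀ u ∈ t, ∀ v, G.Adj u v → v ≠ x → v ∈ t) (has : a ∈ s)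
    (hat : a ∈ t) : s ⊆ t := by
  intro v hv
  refine (hs.preconnected ⟨a, has⟩ ⟨v, hv⟩).mem_of_adj_closed (s := {u | ↑u ∈ t})
    (fun (u w : s) huw hu => ht _ hu _ huw fun hwx => hx (hwx ▸ w.2)) hat

section Side

variable [Fintype V]

open Classical in
noncomputable def side (G : SimpleGraph V) (x y : V) : Finset V :=
  ((G.deleteEdges {s(x, y)}).connectedComponentMk y).supp.toFinset

variable {x y z u v : V}

theorem mem_side : u ∈ G.side x y ↔ (G.deleteEdges {s(x, y)}).Reachable y u := by
  simp [side, ConnectedComponent.eq, reachable_comm]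

theorem self_mem_side : y ∈ G.side x y := mem_side.2 .rfl

theorem mem_side_of_adj (hu : u ∈ G.side x y) (huv : G.Adj u v) (he : s(u, v) ≠ s(x, y)) :
    v ∈ G.side x y :=
  mem_side.2 <| (mem_side.1 hu).trans (deleteEdges_adj.2 ⟨huv, he⟩).reachable

theorem connected_induce_side : (G.induce (G.side x y : Set V)).Connected := by
  classical
  let c := (G.deleteEdges {s(x, y)}).connectedComponentMk y
  have hc : (G.side x y : Set V) = c.supp := by simp [side, c]
  rw [hc]
  exact c.connected_toSimpleGraph.mono
    fun _ _ h => deleteEdges_le (G := G) {s(x, y)} h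

theorem disjoint_side (hG : G.IsAcyclic) (hxy : G.Adj x y) :
    Disjoint (G.side x y) (G.side y x) := by
  refine Finset.disjoint_left.2 fun u hxu hyu => ?_
  rw [mem_side] at hxu
  rw [mem_side, Sym2.eq_swap] at hyu
  exact isBridge_iff.1 (isAcyclic_iff_forall_adj_isBridge.1 hG hxy) (hyu.trans hxu.symm)

theorem notMem_side (hG : G.IsAcyclic) (hxy : G.Adj x y) : x ∉ G.side x y :=
  Finset.disjoint_right.1 (disjoint_side hG hxy) self_mem_side

theorem mem_side_of_adj_of_ne (hG : G.IsAcyclic) (hxy : G.Adj x y) (hu : u ∈ G.side x y)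
    (huv : G.Adj u v) (hvx : v ≠ x) : v ∈ G.side x y := by
  refine mem_side_of_adj hu huv fun he => ?_
  rcases Sym2.eq_iff.1 he with ⟨rfl, -⟩ | ⟨-, rfl⟩
  · exact notMem_side hG hxy hu
  · exact hvx rfl

theorem mem_side_or_mem_side (hG : G.Connected) (u : V) :
    u ∈ G.side x y ∨ u ∈ G.side y x := by
  refine (hG.preconnected y u).mem_of_adj_closed (s := {u | u ∈ G.side x y ∨ u ∈ G.side y x})
    (fun a b hab ha => ?_) (Or.inl self_mem_side)
  by_cases he : s(a, b) = s(x, y)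
  · rcases Sym2.eq_iff.1 he with ⟨-, rfl⟩ | ⟨-, rfl⟩
    exacts [Or.inl self_mem_side, Or.inr self_mem_side]
  · exact ha.imp (mem_side_of_adj · hab he)
      (mem_side_of_adj · hab fun h => he (h.trans Sym2.eq_swap))

theorem exists_adj_mem_side (hG : G.Connected) (hux : u ≠ x) :
    ∃ t, G.Adj x t ∧ u ∈ G.side x t := by
  have hu := (hG.preconnected x u).mem_of_adj_closed
    (s := {v | v = x ∨ ∃ t, G.Adj x t ∧ v ∈ G.side x t}) ?_ (Or.inl rfl)
  · exact hu.resolve_left hux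
  rintro a b hab (rfl | ⟨t, hat, ha⟩)
  · exact Or.inr ⟨b, hab, self_mem_side⟩
  by_cases he : s(a, b) = s(x, t)
  · rcases Sym2.eq_iff.1 he with ⟨-, rfl⟩ | ⟨-, rfl⟩
    exacts [Or.inr ⟨b, hat, self_mem_side⟩, Or.inl rfl]
  · exact Or.inr ⟨t, hat, mem_side_of_adj ha hab he⟩

theorem side_subset_side (hG : G.IsAcyclic) (hxy : G.Adj x y) (hx : x ∉ G.side u v)
    (hv : v ∈ G.side x y) : G.side u v ⊆ G.side x y := by
  rw [← Finset.coe_subset]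
  exact subset_of_induce_connected connected_induce_side hx
    (fun _ ha _ hab hbx => mem_side_of_adj_of_ne hG hxy ha hab hbx) self_mem_side hv

theorem side_ssubset_side (hG : G.IsAcyclic) (hxy : G.Adj x y) (hyz : G.Adj y z)
    (hzx : z ≠ x) : G.side y z ⊂ G.side x y := by
  have hx : x ∉ G.side y z := fun hx => notMem_side hG hyz (mem_side_of_adj hx hxy fun he => by
    rcases Sym2.eq_iff.1 he with ⟨rfl, -⟩ | ⟨rfl, -⟩
    exacts [hxy.ne rfl, hzx rfl])
  refine (Finset.ssubset_iff_of_subset (side_subset_side hG hxy hx ?_)).2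
    ⟨y, self_mem_side, notMem_side hG hyz⟩
  exact mem_side_of_adj_of_ne hG hxy self_mem_side hyz hzx

end Side

end SimpleGraph

namespace NodalCurve

open SimpleGraph

variable {C : NodalCurve} {S A B : Finset C.V} {x y z : C.V}

theorem exists_ends_eq (n : C.N) : ∃ a b, C.ends n = s(a, b) := by
  induction C.ends n using Sym2.ind with
  | _ a b => exact ⟨a, b, rfl⟩

theorem endsIn_of_ends_eq {n : C.N} {a b : C.V} (h : C.ends n = s(a, b)) :
    C.endsIn S n = (if a ∈ S then 1 else 0) + (if b ∈ S then 1 else 0) := by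
  rw [endsIn, h, Sym2.lift_mk]

theorem graph_adj : C.graph.Adj x y ↔ x ≠ y ∧ ∃ n, C.ends n = s(x, y) := by
  simp only [graph, fromRel_adj, Sym2.eq_swap (a := y), or_self]

theorem internalNodes_univ : C.internalNodes univ = Fintype.card C.N := by
  rw [internalNodes, filter_true_of_mem, card_univ]
  intro n _
  obtain ⟨a, b, h⟩ := exists_ends_eq n
  simp [endsIn_of_ends_eq h]

theorem internalNodes_eq_card_edgeSet (hct : C.CompactType) (S : Finset C.V) :
    C.internalNodes S = Nat.card (C.graph.induce (S : Set C.V)).edgeSet := by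
  classical
  have hcard := congrArg card (map_edgeFinset_induce (G := C.graph) (s := (S : Set C.V)))
  simp only [card_map, Finset.toFinset_coe, edgeFinset, Set.toFinset_card,
    Fintype.card_eq_nat_card] at hcard
  rw [hcard, internalNodes, ← card_image_of_injective _ hct.1]
  congr 1
  ext e
  induction e using Sym2.ind with | _ a b => ?_
  simp only [mem_image, mem_filter, mem_univ, true_and, mem_inter, Set.mem_toFinset, mem_edgeSet,
    graph_adj, mem_sym2_iff, Sym2.mem_iff, forall_eq_or_imp, forall_eq]
  constructor
  · rintro ⟨n, hS, hn⟩
    rw [endsIn_of_ends_eq hn] at hS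
    refine ⟨⟨fun hab => hct.2.1 n (by simp [hn, hab]), n, hn⟩, ?_⟩
    split_ifs at hS with ha hb <;> simp_all
  · rintro ⟨⟨-, n, hn⟩, ha, hb⟩
    exact ⟨n, by simp [endsIn_of_ends_eq hn, ha, hb], hn⟩

def weight (C : NodalCurve) (S : Finset C.V) : ℤ := ∑ v ∈ S, (C.w v : ℤ)

theorem weight_mono (h : A ⊆ B) : C.weight A ≤ C.weight B :=
  sum_le_sum_of_subset_of_nonneg h fun _ _ _ => by positivity

theorem genus_eq_genusSub_univ : C.genus = C.genusSub univ := by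
  simp [genus, genusSub, internalNodes_univ]

theorem internalNodes_add_one_le (hct : C.CompactType) (hS : S.Nonempty) :
    C.internalNodes S + 1 ≤ #S := by
  have : Nonempty (S : Set C.V) := hS.to_subtype
  rw [internalNodes_eq_card_edgeSet hct]
  simpa using (hct.2.2.isAcyclic.induce (S : Set C.V)).card_edgeSet_add_one_le

theorem internalNodes_add_one_eq (hct : C.CompactType) (hS : C.connectedSub S) :
    C.internalNodes S + 1 = #S := by
  rw [internalNodes_eq_card_edgeSet hct]
  simpa using (isTree_iff_connected_and_card.1 ⟨hS, hct.2.2.isAcyclic.induce _⟩).2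

theorem genusSub_le_weight (hct : C.CompactType) (hS : S.Nonempty) :
    C.genusSub S ≤ C.weight S := by
  have := internalNodes_add_one_le hct hS
  simp only [genusSub, weight]
  omega

theorem genusSub_eq_weight (hct : C.CompactType) (hS : C.connectedSub S) :
    C.genusSub S = C.weight S := by
  have := internalNodes_add_one_eq hct hS
  simp only [genusSub, weight]
  omega

theorem genus_eq_weight_univ (hconn : C.Conn) (hct : C.CompactType) :
    C.genus = C.weight univ := by
  have huniv : C.connectedSub univ := by
    rw [connectedSub, coe_univ]
    exact (induceUnivIso C.graph).connected_iff.2 hconn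
  rw [genus_eq_genusSub_univ, genusSub_eq_weight hct huniv]

theorem endsIn_le_two (S : Finset C.V) (n : C.N) : C.endsIn S n ≤ 2 := by
  obtain ⟨a, b, h⟩ := exists_ends_eq n
  rw [endsIn_of_ends_eq h]
  split_ifs <;> omega

theorem sum_endsIn (S : Finset C.V) : ∑ n, C.endsIn S n = C.k S + 2 * C.internalNodes S := by
  rw [k, internalNodes, card_eq_sum_ones, card_eq_sum_ones, sum_filter, sum_filter, mul_sum,
    ← sum_add_distrib]
  refine sum_congr rfl fun n _ => ?_
  have := endsIn_le_two S n
  generalize C.endsIn S n = e at *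
  interval_cases e <;> rfl

theorem degω_eq (S : Finset C.V) : C.degω S = 2 * C.genusSub S - 2 + C.k S := by
  rw [degω, genusSub, ← Nat.cast_sum, sum_endsIn, sum_sub_distrib, ← mul_sum, sum_const,
    nsmul_eq_mul]
  push_cast
  ring

theorem endsIn_eq_sum_singleton (S : Finset C.V) (n : C.N) :
    C.endsIn S n = ∑ v ∈ S, C.endsIn {v} n := by
  obtain ⟨a, b, h⟩ := exists_ends_eq n
  simp [endsIn_of_ends_eq h, sum_add_distrib]

theorem degω_eq_sum_singleton (S : Finset C.V) : C.degω S = ∑ v ∈ S, C.degω {v} := by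
  simp only [degω, sum_singleton, sum_add_distrib, endsIn_eq_sum_singleton S, Nat.cast_sum]
  rw [sum_comm]

theorem Stable.card_le_degω (hst : C.Stable) (S : Finset C.V) : (#S : ℤ) ≤ C.degω S := by
  rw [degω_eq_sum_singleton, card_eq_sum_ones, Nat.cast_sum]
  refine sum_le_sum fun v _ => ?_
  have := hst v
  rw [degω, sum_singleton]
  omega

theorem k_sdiff_le (A B : Finset C.V) : C.k (A \ B) ≤ C.k A + C.k B := by
  refine (card_le_card fun n hn => ?_).trans (card_union_le _ _)
  obtain ⟨a, b, h⟩ := exists_ends_eq n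
  simp only [mem_filter, mem_univ, true_and, mem_union, endsIn_of_ends_eq h, mem_sdiff] at hn ⊢
  by_cases ha : a ∈ A <;> by_cases hb : b ∈ A <;> by_cases ha' : a ∈ B <;>
    by_cases hb' : b ∈ B <;> simp_all

theorem one_le_weight (hct : C.CompactType) (hst : C.Stable) (hS : S.Nonempty)
    (hk : C.k S ≤ 2) : 1 ≤ C.weight S := by
  have h1 := hst.card_le_degω S
  have h2 := genusSub_le_weight hct hS
  have h3 := hS.card_pos
  rw [degω_eq] at h1
  omega

theorem k_side_le_one (hct : C.CompactType) : C.k (C.graph.side x y) ≤ 1 := by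
  have hends : ∀ n, C.endsIn (C.graph.side x y) n = 1 → C.ends n = s(x, y) := by
    intro n hn
    obtain ⟨a, b, h⟩ := exists_ends_eq n
    have hab : C.graph.Adj a b := graph_adj.2 ⟨fun hab => hct.2.1 n (by simp [h, hab]), n, h⟩
    rw [endsIn_of_ends_eq h] at hn
    rw [h]
    by_contra he
    by_cases ha : a ∈ C.graph.side x y <;> by_cases hb : b ∈ C.graph.side x y <;>
      simp [ha, hb] at hn
    · exact hb (mem_side_of_adj ha hab he)
    · exact ha (mem_side_of_adj hb hab.symm fun he' => he (Sym2.eq_swap.trans he'))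
  rw [k, card_le_one]
  intro n hn m hm
  simp only [mem_filter, mem_univ, true_and] at hn hm
  exact hct.1 ((hends n hn).trans (hends m hm).symm)

theorem weight_lt_weight_of_ssubset (hct : C.CompactType) (hst : C.Stable) (hBA : B ⊂ A)
    (hA : C.k A ≤ 1) (hB : C.k B ≤ 1) : C.weight B < C.weight A := by
  have hpos := one_le_weight hct hst (sdiff_nonempty.2 (not_subset_of_ssubset hBA))
    ((k_sdiff_le A B).trans (by omega))
  have hsplit : C.weight A = C.weight B + C.weight (A \ B) := by
    rw [weight, weight, weight, ← sum_union disjoint_sdiff, union_sdiff_of_subset hBA.subset]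
  omega

theorem complComponent_side (hct : C.CompactType) (hxy : C.graph.Adj x y) :
    C.complComponent x (C.graph.side x y) :=
  ⟨notMem_side hct.2.2.isAcyclic hxy, ⟨y, self_mem_side⟩, connected_induce_side,
    fun _ hu _ huv hvx => mem_side_of_adj_of_ne hct.2.2.isAcyclic hxy hu huv hvx⟩

theorem complComponent_iff (hconn : C.Conn) (hct : C.CompactType) :
    C.complComponent x S ↔ ∃ y, C.graph.Adj x y ∧ S = C.graph.side x y := by
  refine ⟨fun hS => ?_, fun ⟨y, hxy, hS⟩ => hS ▸ complComponent_side hct hxy⟩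
  obtain ⟨hxS, ⟨v, hv⟩, hSconn, hScl⟩ := hS
  obtain ⟨y, hy, hxy⟩ : ∃ y ∈ S, C.graph.Adj x y := by
    by_contra! h
    exact hxS <| (hconn.preconnected v x).mem_of_adj_closed (s := S)
      (fun a b hab ha => hScl a ha b hab fun hbx => h a ha (hbx ▸ hab.symm)) hv
  have hside := complComponent_side hct hxy
  refine ⟨y, hxy, subset_antisymm ?_ ?_⟩
  · exact coe_subset.1 (subset_of_induce_connected hSconn hxS hside.2.2.2 hy self_mem_side)
  · exact coe_subset.1 (subset_of_induce_connected hside.2.2.1 hside.1 hScl self_mem_side hy)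

theorem forall_complComponent_iff (hconn : C.Conn) (hct : C.CompactType) (P : ℤ → Prop) :
    (∀ S, C.complComponent x S → P (C.genusSub S)) ↔
      ∀ y, C.graph.Adj x y → P (C.weight (C.graph.side x y)) := by
  simp only [complComponent_iff hconn hct]
  constructor
  · intro h y hxy
    rw [← genusSub_eq_weight hct connected_induce_side]
    exact h _ ⟨y, hxy, rfl⟩
  · rintro h _ ⟨y, hxy, rfl⟩
    rw [genusSub_eq_weight hct connected_induce_side]
    exact h y hxy

theorem central_iff (hconn : C.Conn) (hct : C.CompactType) :
    C.central x ↔ ∀ y, C.graph.Adj x y → 2 * C.weight (C.graph.side x y) < C.genus :=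
  forall_complComponent_iff hconn hct (2 * · < C.genus)

theorem semicentral_iff (hconn : C.Conn) (hct : C.CompactType) :
    C.semicentral x ↔ ∀ y, C.graph.Adj x y → 2 * C.weight (C.graph.side x y) ≤ C.genus :=
  forall_complComponent_iff hconn hct (2 * · ≤ C.genus)

theorem weight_side_add_weight_side (hconn : C.Conn) (hct : C.CompactType)
    (hxy : C.graph.Adj x y) :
    C.weight (C.graph.side x y) + C.weight (C.graph.side y x) = C.genus := by
  rw [genus_eq_weight_univ hconn hct, weight, weight, weight,
    ← sum_union (disjoint_side hct.2.2.isAcyclic hxy)]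
  congr 1
  exact eq_univ_of_forall fun u => mem_union.2 (mem_side_or_mem_side hconn u)

theorem exists_balanced_edge (hconn : C.Conn) (hct : C.CompactType)
    (hnc : ∀ x, ¬ C.central x) :
    ∃ x y, C.graph.Adj x y ∧ 2 * C.weight (C.graph.side x y) = C.genus ∧
      2 * C.weight (C.graph.side y x) = C.genus := by
  classical
  have heavy : ∀ x, ∃ y, C.graph.Adj x y ∧ C.genus ≤ 2 * C.weight (C.graph.side x y) := by
    simpa [central_iff hconn hct] using hnc
  let heavyEdges := univ.filter fun p : C.V × C.V =>
    C.graph.Adj p.1 p.2 ∧ C.genus ≤ 2 * C.weight (C.graph.side p.1 p.2)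
  have hne : heavyEdges.Nonempty := by
    obtain ⟨x⟩ := hconn.nonempty
    obtain ⟨y, h⟩ := heavy x
    exact ⟨(x, y), by simpa [heavyEdges] using h⟩
  obtain ⟨⟨x, y⟩, hp, hmin⟩ :=
    heavyEdges.exists_min_image (fun p => #(C.graph.side p.1 p.2)) hne
  simp only [heavyEdges, mem_filter, mem_univ, true_and] at hp hmin
  obtain ⟨z, hyz, hz⟩ := heavy y
  obtain rfl : x = z := by
    by_contra hxz
    exact (hmin (y, z) ⟨hyz, hz⟩).not_gt
      (card_lt_card (side_ssubset_side hct.2.2.isAcyclic hp.1 hyz (Ne.symm hxz)))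
  have hsum := weight_side_add_weight_side hconn hct hp.1
  exact ⟨x, y, hp.1, by omega, by omega⟩

theorem semicentral_of_balanced (hconn : C.Conn) (hct : C.CompactType) (hxy : C.graph.Adj x y)
    (h : 2 * C.weight (C.graph.side x y) = C.genus) : C.semicentral x := by
  rw [semicentral_iff hconn hct]
  intro z hxz
  rcases eq_or_ne z y with rfl | hzy
  · exact h.le
  · have hle := weight_mono (side_ssubset_side hct.2.2.isAcyclic hxy.symm hxz hzy).subset
    have hsum := weight_side_add_weight_side hconn hct hxy
    omega

theorem eq_of_semicentral_of_mem_side (hconn : C.Conn) (hct : C.CompactType) (hst : C.Stable)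
    (hxy : C.graph.Adj x y) (h : 2 * C.weight (C.graph.side y x) = C.genus)
    (hz : z ∈ C.graph.side x y) (hsc : C.semicentral z) : z = y := by
  by_contra hzy
  have hG := hct.2.2.isAcyclic
  have hxz : x ≠ z := fun hxz => notMem_side hG hxy (hxz ▸ hz)
  obtain ⟨t, hzt, hxt⟩ := exists_adj_mem_side hconn hxz
  have hsub := side_subset_side hG hzt (disjoint_left.1 (disjoint_side hG hxy) hz) hxt
  have hy : y ∈ C.graph.side z t := mem_side_of_adj_of_ne hG hzt hxt hxy (Ne.symm hzy)
  have hlt := weight_lt_weight_of_ssubset hct hst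
    ((ssubset_iff_of_subset hsub).2 ⟨y, hy, notMem_side hG hxy.symm⟩)
    (k_side_le_one hct) (k_side_le_one hct)
  have hle := (semicentral_iff hconn hct).1 hsc t hzt
  omega

end NodalCurve

theorem two_semicentral_of_no_central_general (C : NodalCurve) (hconn : C.Conn)
    (hct : C.CompactType) (hst : C.Stable)
    (hnc : ∀ x : C.V, ¬ C.central x) :
    ∃ x y : C.V, x ≠ y ∧ C.graph.Adj x y ∧ C.semicentral x ∧ C.semicentral y ∧
      ∀ z : C.V, C.semicentral z → z = x ∨ z = y := by
  obtain ⟨x, y, hxy, hx, hy⟩ := NodalCurve.exists_balanced_edge hconn hct hnc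
  refine ⟨x, y, hxy.ne, hxy, NodalCurve.semicentral_of_balanced hconn hct hxy hx,
    NodalCurve.semicentral_of_balanced hconn hct hxy.symm hy, fun z hz => ?_⟩
  rcases SimpleGraph.mem_side_or_mem_side hconn (x := x) (y := y) z with hzy | hzx
  · exact Or.inr (NodalCurve.eq_of_semicentral_of_mem_side hconn hct hst hxy hy hzy hz)
  · exact Or.inl (NodalCurve.eq_of_semicentral_of_mem_side hconn hct hst hxy.symm hx hzx hz)

/-- a stable curve of compact type of genus `g ≥ 2` with no central
component has exactly two semicentral components, and they intersect in a node. -/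
theorem two_semicentral_of_no_central (C : NodalCurve) (hconn : C.Conn)
    (hct : C.CompactType) (hst : C.Stable) (hg : 2 ≤ C.genus)
    (hnc : ∀ x : C.V, ¬ C.central x) :
    ∃ x y : C.V, x ≠ y ∧ C.graph.Adj x y ∧ C.semicentral x ∧ C.semicentral y ∧
      ∀ z : C.V, C.semicentral z → z = x ∨ z = y :=
  two_semicentral_of_no_central_general C hconn hct hst hnc
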